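/- On the elliptic curve E over ℚ(t) with Weierstrass equation y^2 = x^3 + ((4t^4 - 8t^3 + 4t^2 + 1)/t^4) x^2 + (8(t-1)^2/t^6) x + 16(t-1)^4/t^8, there exists a torsion point of exact order 8; equivalently, the fiber of the elliptic modular surface Ξ1(8) model has a rational 8-torsion section. -/

import Mathlib

open RatFunc

/-- The elliptic curve `E/ℚ(t)` with Weierstrass equation
`y² = x³ + ((4t⁴-8t³+4t²+1)/t⁴) x² + (8(t-1)²/t⁶) x + 16(t-1)⁴/t⁸`, the Weierstrass model of
the generic fiber of the elliptic fibration on `Z₈`. -/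
noncomputable def E8 : WeierstrassCurve.Affine (RatFunc ℚ) where
  a₁ := 0
  a₂ := (4 * RatFunc.X ^ 4 - 8 * RatFunc.X ^ 3 + 4 * RatFunc.X ^ 2 + 1) / RatFunc.X ^ 4
  a₃ := 0
  a₄ := 8 * (RatFunc.X - 1) ^ 2 / RatFunc.X ^ 6
  a₆ := 16 * (RatFunc.X - 1) ^ 4 / RatFunc.X ^ 8

instance : CharZero (RatFunc ℚ) :=
  charZero_of_injective_algebraMap (algebraMap ℚ (RatFunc ℚ)).injective

namespace E8Aux

open WeierstrassCurve WeierstrassCurve.Affine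

open Classical

lemma E8_a₁ : E8.a₁ = 0 := rfl
lemma E8_a₂ : E8.a₂ =
    (4 * RatFunc.X ^ 4 - 8 * RatFunc.X ^ 3 + 4 * RatFunc.X ^ 2 + 1) / RatFunc.X ^ 4 := rfl
lemma E8_a₃ : E8.a₃ = 0 := rfl
lemma E8_a₄ : E8.a₄ = 8 * (RatFunc.X - 1) ^ 2 / RatFunc.X ^ 6 := rfl
lemma E8_a₆ : E8.a₆ = 16 * (RatFunc.X - 1) ^ 4 / RatFunc.X ^ 8 := rfl

lemma hT : (RatFunc.X : RatFunc ℚ) ≠ 0 := RatFunc.X_ne_zero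

lemma hn (n : ℕ) : (RatFunc.X : RatFunc ℚ) ^ n ≠ 0 := pow_ne_zero n hT

lemma hT1 : (RatFunc.X : RatFunc ℚ) - 1 ≠ 0 := by
  have h : (Polynomial.X - 1 : Polynomial ℚ) ≠ 0 := by
    intro h
    have := congrArg (Polynomial.eval 0) h
    simp at this
  rw [← RatFunc.algebraMap_X, ← map_one (algebraMap (Polynomial ℚ) (RatFunc ℚ)), ← map_sub]
  exact RatFunc.algebraMap_ne_zero h

lemma hT2 : 2 * (RatFunc.X : RatFunc ℚ) - 1 ≠ 0 := by
  have h : (2 * Polynomial.X - 1 : Polynomial ℚ) ≠ 0 := by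
    intro h
    have := congrArg (Polynomial.eval 0) h
    simp at this
  rw [← RatFunc.algebraMap_X, ← map_one (algebraMap (Polynomial ℚ) (RatFunc ℚ)),
    ← map_ofNat (algebraMap (Polynomial ℚ) (RatFunc ℚ)) 2, ← map_mul, ← map_sub]
  exact RatFunc.algebraMap_ne_zero h

/-- x-coordinate of the 8-torsion point. -/
noncomputable def xP : RatFunc ℚ := 4 * (RatFunc.X - 1) / RatFunc.X ^ 2
/-- y-coordinate of the 8-torsion point. -/
noncomputable def yP : RatFunc ℚ :=
  4 * (RatFunc.X - 1) * (2 * RatFunc.X - 1) / RatFunc.X ^ 3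
/-- y-coordinate of the 4-torsion point `2 • P = (0, yQ)`. -/
noncomputable def yQ : RatFunc ℚ := 4 * (RatFunc.X - 1) ^ 2 / RatFunc.X ^ 4
/-- x-coordinate of the 2-torsion point `4 • P = (xR, 0)`. -/
noncomputable def xR : RatFunc ℚ :=
  (-4 * RatFunc.X ^ 2 + 8 * RatFunc.X - 4) / RatFunc.X ^ 2

lemma yP_ne_zero : yP ≠ 0 :=
  div_ne_zero (mul_ne_zero (mul_ne_zero (by norm_num : (4 : RatFunc ℚ) ≠ 0) hT1) hT2) (hn 3)

lemma yQ_ne_zero : yQ ≠ 0 :=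
  div_ne_zero (mul_ne_zero (by norm_num : (4 : RatFunc ℚ) ≠ 0) (pow_ne_zero 2 hT1)) (hn 4)

lemma hP : E8.Nonsingular xP yP := by
  rw [nonsingular_iff, equation_iff]
  constructor
  · simp only [E8_a₁, E8_a₂, E8_a₃, E8_a₄, E8_a₆, xP, yP, zero_mul, mul_zero, add_zero,
      zero_add]
    simp only [div_pow, div_mul_eq_mul_div, mul_div_assoc', div_div, ← pow_mul, ← pow_add,
      Nat.reduceMul, Nat.reduceAdd]
    rw [div_add_div _ _ (hn 6) (hn 8), div_add_div _ _ (mul_ne_zero (hn 6) (hn 8)) (hn 8),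
      div_add_div _ _ (mul_ne_zero (mul_ne_zero (hn 6) (hn 8)) (hn 8)) (hn 8),
      div_eq_div_iff (hn 6) (mul_ne_zero (mul_ne_zero (mul_ne_zero (hn 6) (hn 8)) (hn 8)) (hn 8))]
    ring
  · right
    simp only [E8_a₁, E8_a₃, zero_mul, sub_zero]
    intro h
    apply yP_ne_zero
    have h2 : (2 : RatFunc ℚ) * yP = 0 := by linear_combination h
    exact (mul_eq_zero.mp h2).resolve_left two_ne_zero

lemma hQ : E8.Nonsingular 0 yQ := by
  rw [nonsingular_iff, equation_iff]
  constructor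
  · simp only [E8_a₁, E8_a₂, E8_a₃, E8_a₄, E8_a₆, yQ, zero_mul, mul_zero, add_zero, zero_add,
      ne_eq, OfNat.ofNat_ne_zero, not_false_eq_true, zero_pow]
    rw [div_pow, ← pow_mul, div_eq_div_iff (hn 8) (hn 8)]
    ring
  · right
    simp only [E8_a₁, E8_a₃, zero_mul, sub_zero]
    intro h
    apply yQ_ne_zero
    have h2 : (2 : RatFunc ℚ) * yQ = 0 := by linear_combination h
    exact (mul_eq_zero.mp h2).resolve_left two_ne_zero

lemma hR_key : 3 * xR ^ 2 + 2 * E8.a₂ * xR + E8.a₄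
    = 16 * (RatFunc.X - 1) ^ 4 / RatFunc.X ^ 4 := by
  simp only [E8_a₂, E8_a₄, xR]
  simp only [div_pow, div_mul_eq_mul_div, mul_div_assoc', div_div, ← pow_mul, ← pow_add,
    Nat.reduceMul, Nat.reduceAdd]
  rw [div_add_div _ _ (hn 4) (hn 6), div_add_div _ _ (mul_ne_zero (hn 4) (hn 6)) (hn 6),
    div_eq_div_iff (mul_ne_zero (mul_ne_zero (hn 4) (hn 6)) (hn 6)) (hn 4)]
  ring

lemma hR : E8.Nonsingular xR 0 := by
  rw [nonsingular_iff, equation_iff]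
  constructor
  · simp only [E8_a₁, E8_a₂, E8_a₃, E8_a₄, E8_a₆, xR, zero_mul, mul_zero, add_zero, zero_add,
      ne_eq, OfNat.ofNat_ne_zero, not_false_eq_true, zero_pow]
    simp only [div_pow, div_mul_eq_mul_div, mul_div_assoc', div_div, ← pow_mul, ← pow_add,
      Nat.reduceMul, Nat.reduceAdd]
    rw [div_add_div _ _ (hn 6) (hn 8), div_add_div _ _ (mul_ne_zero (hn 6) (hn 8)) (hn 8),
      div_add_div _ _ (mul_ne_zero (mul_ne_zero (hn 6) (hn 8)) (hn 8)) (hn 8),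
      eq_comm, div_eq_zero_iff]
    left
    ring
  · left
    rw [hR_key, E8_a₁, zero_mul]
    exact fun h => (div_ne_zero (mul_ne_zero (by norm_num) (pow_ne_zero 4 hT1)) (hn 4)) h.symm

lemma hPy' : yP ≠ E8.negY xP yP := by
  simp only [negY, E8_a₁, E8_a₃, zero_mul, sub_zero]
  intro h
  apply yP_ne_zero
  have h2 : (2 : RatFunc ℚ) * yP = 0 := by linear_combination h
  exact (mul_eq_zero.mp h2).resolve_left two_ne_zero

lemma hQy' : yQ ≠ E8.negY 0 yQ := by
  simp only [negY, E8_a₁, E8_a₃, zero_mul, sub_zero]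
  intro h
  apply yQ_ne_zero
  have h2 : (2 : RatFunc ℚ) * yQ = 0 := by linear_combination h
  exact (mul_eq_zero.mp h2).resolve_left two_ne_zero

lemma some_eq_some {F : Type*} [Field F] {W : WeierstrassCurve.Affine F}
    {x₁ y₁ x₂ y₂ : F} (h₁ : W.Nonsingular x₁ y₁) (h₂ : W.Nonsingular x₂ y₂)
    (hx : x₁ = x₂) (hy : y₁ = y₂) : Point.some _ _ h₁ = Point.some _ _ h₂ := by
  subst hx; subst hy; rfl

lemma denP : yP - E8.negY xP yP = 8 * (RatFunc.X - 1) * (2 * RatFunc.X - 1) / RatFunc.X ^ 3 := by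
  simp only [negY, E8_a₁, E8_a₃, zero_mul, sub_zero, yP, sub_neg_eq_add, ← add_div]
  rw [div_eq_div_iff (hn 3) (hn 3)]
  ring

lemma denP_ne : yP - E8.negY xP yP ≠ 0 := by
  rw [denP]
  exact div_ne_zero (mul_ne_zero (mul_ne_zero (by norm_num) hT1) hT2) (hn 3)

lemma numP : 3 * xP ^ 2 + 2 * E8.a₂ * xP + E8.a₄ - E8.a₁ * yP
    = 8 * (RatFunc.X - 1) * (2 * RatFunc.X - 1) * (2 * RatFunc.X ^ 2 - 1) / RatFunc.X ^ 5 := by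
  simp only [E8_a₁, E8_a₂, E8_a₄, xP, zero_mul, sub_zero]
  simp only [div_pow, div_mul_eq_mul_div, mul_div_assoc', div_div, ← pow_mul, ← pow_add,
    Nat.reduceMul, Nat.reduceAdd]
  rw [div_add_div _ _ (hn 4) (hn 6), div_add_div _ _ (mul_ne_zero (hn 4) (hn 6)) (hn 6),
    div_eq_div_iff (mul_ne_zero (mul_ne_zero (hn 4) (hn 6)) (hn 6)) (hn 5)]
  ring

lemma slopeP : E8.slope xP xP yP yP = (2 * RatFunc.X ^ 2 - 1) / RatFunc.X ^ 2 := by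
  rw [slope_of_Y_ne rfl hPy', numP, denP, div_div_div_comm,
    div_eq_div_iff (div_ne_zero (hn 5) (hn 3)) (hn 2), div_mul_eq_mul_div, mul_div_assoc',
    div_eq_div_iff (mul_ne_zero (mul_ne_zero (by norm_num) hT1) hT2) (hn 3)]
  ring

lemma denQ : yQ - E8.negY 0 yQ = 8 * (RatFunc.X - 1) ^ 2 / RatFunc.X ^ 4 := by
  simp only [negY, E8_a₁, E8_a₃, zero_mul, sub_zero, yQ, sub_neg_eq_add, ← add_div]
  rw [div_eq_div_iff (hn 4) (hn 4)]
  ring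

lemma slopeQ : E8.slope 0 0 yQ yQ = 1 / RatFunc.X ^ 2 := by
  rw [slope_of_Y_ne rfl hQy', denQ]
  simp only [E8_a₁, E8_a₄, zero_mul, mul_zero, sub_zero, add_zero, zero_add, ne_eq,
    OfNat.ofNat_ne_zero, not_false_eq_true, zero_pow, mul_comm]
  rw [div_div_div_comm, div_eq_div_iff (div_ne_zero (hn 6) (hn 4)) (hn 2),
    div_mul_eq_mul_div, mul_div_assoc',
    div_eq_div_iff (mul_ne_zero (by norm_num : (8 : RatFunc ℚ) ≠ 0) (pow_ne_zero 2 hT1)) (hn 4)]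
  ring

lemma addX_P : E8.addX xP xP ((2 * RatFunc.X ^ 2 - 1) / RatFunc.X ^ 2) = 0 := by
  simp only [addX, E8_a₁, E8_a₂, zero_mul, add_zero, xP]
  simp only [div_pow, ← pow_mul, Nat.reduceMul]
  rw [div_sub_div _ _ (hn 4) (hn 4), div_sub_div _ _ (mul_ne_zero (hn 4) (hn 4)) (hn 2),
    div_sub_div _ _ (mul_ne_zero (mul_ne_zero (hn 4) (hn 4)) (hn 2)) (hn 2), div_eq_zero_iff]
  left
  ring

lemma addY_P : E8.addY xP xP yP ((2 * RatFunc.X ^ 2 - 1) / RatFunc.X ^ 2) = yQ := by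
  simp only [addY, negAddY]
  rw [addX_P]
  simp only [negY, E8_a₁, E8_a₃, zero_mul, sub_zero, mul_zero]
  rw [zero_sub, mul_neg, neg_add, neg_neg, ← sub_eq_add_neg]
  simp only [xP, yP, yQ, div_mul_div_comm, ← pow_add, Nat.reduceAdd]
  rw [div_sub_div _ _ (hn 4) (hn 3), div_eq_div_iff (mul_ne_zero (hn 4) (hn 3)) (hn 4)]
  ring

lemma addX_Q : E8.addX 0 0 (1 / RatFunc.X ^ 2) = xR := by
  simp only [addX, E8_a₁, E8_a₂, zero_mul, add_zero, sub_zero, xR]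
  simp only [div_pow, one_pow, ← pow_mul, Nat.reduceMul]
  rw [div_sub_div _ _ (hn 4) (hn 4), div_eq_div_iff (mul_ne_zero (hn 4) (hn 4)) (hn 2)]
  ring

lemma addY_Q : E8.addY 0 0 yQ (1 / RatFunc.X ^ 2) = 0 := by
  simp only [addY, negAddY]
  rw [addX_Q]
  simp only [negY, E8_a₁, E8_a₃, zero_mul, sub_zero, mul_zero]
  rw [neg_eq_zero]
  simp only [xR, yQ, div_mul_div_comm, one_mul, ← pow_add, Nat.reduceAdd]
  rw [div_add_div _ _ (hn 4) (hn 4), div_eq_zero_iff]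
  left
  ring

lemma double_P : Point.some _ _ hP + Point.some _ _ hP = Point.some _ _ hQ := by
  rw [Point.add_self_of_Y_ne hPy']
  refine some_eq_some _ _ ?_ ?_
  · rw [slopeP]; exact addX_P
  · rw [slopeP]; exact addY_P

lemma double_Q : Point.some _ _ hQ + Point.some _ _ hQ = Point.some _ _ hR := by
  rw [Point.add_self_of_Y_ne hQy']
  refine some_eq_some _ _ ?_ ?_
  · rw [slopeQ]; exact addX_Q
  · rw [slopeQ]; exact addY_Q

lemma double_R : Point.some _ _ hR + Point.some _ _ hR = 0 :=
  Point.add_self_of_Y_eq (by rw [negY, E8_a₁, E8_a₃]; ring)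

end E8Aux

open Classical in
/-- The curve `E₈` has a rational point of exact order `8`: the Mordell–Weil group of the
elliptic modular surface `Ξ₁(8)` contains a rational `8`-torsion section. -/
theorem E8_has_point_of_order_eight :
    ∃ P : WeierstrassCurve.Affine.Point E8, addOrderOf P = 8 := by
  open E8Aux WeierstrassCurve.Affine in
  refine ⟨Point.some _ _ hP, ?_⟩
  have h4 : (4 : ℕ) • Point.some _ _ hP = Point.some _ _ hR := by
    rw [show (4 : ℕ) = 2 * 2 from rfl, mul_smul, two_nsmul, two_nsmul, double_P, double_Q]
  have h8 : (8 : ℕ) • Point.some _ _ hP = 0 := by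
    rw [show (8 : ℕ) = 2 * 4 from rfl, mul_smul, h4, two_nsmul, double_R]
  haveI : Fact (Nat.Prime 2) := ⟨Nat.prime_two⟩
  have := addOrderOf_eq_prime_pow (x := Point.some _ _ hP) (p := 2) (n := 2)
    (by
      rw [show (2 : ℕ) ^ 2 = 4 from rfl, h4]
      exact Point.some_ne_zero hR)
    (by rw [show (2 : ℕ) ^ (2 + 1) = 8 from rfl, h8])
  simpa using this
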